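/- Under the hypotheses of the previous set identity (equicontinuity in x uniformly over y ∉ N), the intersection over q ∈ ℕ of the closed convex hulls conv f(B_{δ_q}(x_*), B_{r'}(y_*) \ N) equals conv f(x_*, B_{r'}(y_*) \ N). -/

import Mathlib

open Set Metric MeasureTheory Filter

/-! Equicontinuity puts `f(B_{δ_q}(x_*), S)` inside the open `ε_q`-thickening of `f(x_*, S)`.
Thickenings of convex sets are convex, so the closed convex hull of the former lies in the closed
`ε_q`-thickening of `conv f(x_*, S)`, and these thickenings shrink to its closure as `ε_q → 0`. -/

theorem iInter_cthickening_eq_closure_of_tendsto {α ι : Type*} [PseudoEMetricSpace α]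
    {l : Filter ι} [l.NeBot] {ε : ι → ℝ} (hε : Tendsto ε l (nhds 0)) (s : Set α) :
    ⋂ i, cthickening (ε i) s = closure s := by
  refine subset_antisymm (fun z hz => ?_) (subset_iInter fun i => closure_subset_cthickening _ s)
  have hdist : ∀ i, Metric.infEDist z s ≤ ENNReal.ofReal (ε i) :=
    fun i => mem_cthickening_iff.1 (mem_iInter.1 hz i)
  have hlim : Tendsto (fun i => ENNReal.ofReal (ε i)) l (nhds 0) := by
    simpa using ENNReal.tendsto_ofReal hε
  exact Metric.mem_closure_iff_infEDist_zero.2 (nonpos_iff_eq_zero.1 (ge_of_tendsto' hlim hdist))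

theorem closure_convexHull_subset_cthickening_convexHull {E : Type*}
    [SeminormedAddCommGroup E] [NormedSpace ℝ E] {ε : ℝ} {s t : Set E}
    (h : s ⊆ thickening ε t) :
    closure (convexHull ℝ s) ⊆ cthickening ε (convexHull ℝ t) :=
  have hconv : convexHull ℝ s ⊆ thickening ε (convexHull ℝ t) :=
    convexHull_min (h.trans (thickening_subset_of_subset ε (subset_convexHull ℝ t)))
      ((convex_convexHull ℝ t).thickening ε)
  (closure_mono hconv).trans (closure_thickening_subset_cthickening ε _)

theorem image2_subset_thickening_image {α β γ : Type*} [PseudoMetricSpace γ]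
    {f : α → β → γ} {s : Set α} {t : Set β} {x₀ : α} {ε : ℝ}
    (h : ∀ y ∈ t, (fun x => f x y) '' s ⊆ ball (f x₀ y) ε) :
    image2 f s t ⊆ thickening ε (f x₀ '' t) := by
  rintro _ ⟨x, hx, y, hy, rfl⟩
  exact mem_thickening_iff.2 ⟨f x₀ y, mem_image_of_mem _ hy, h y hy ⟨x, hx, rfl⟩⟩

theorem iInter_closedConvexHull_image2_eq_general (m : ℕ)
    (f : EuclideanSpace ℝ (Fin m) → EuclideanSpace ℝ (Fin m) → EuclideanSpace ℝ (Fin m))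
    (xstar ystar : EuclideanSpace ℝ (Fin m)) (r' : ℝ)
    (N : Set (EuclideanSpace ℝ (Fin m)))
    (δ ε : ℕ → ℝ) (hδpos : ∀ q, 0 < δ q)
    (hε0 : Tendsto ε atTop (nhds 0))
    (hequi : ∀ q, ∀ y ∉ N,
      (fun x => f x y) '' ball xstar (δ q) ⊆ ball (f xstar y) (ε q)) :
    (⋂ q : ℕ, closure (convexHull ℝ (Set.image2 f (ball xstar (δ q)) (ball ystar r' \ N)))) =
      closure (convexHull ℝ (f xstar '' (ball ystar r' \ N))) := by
  refine subset_antisymm ?_ (subset_iInter fun q => ?_)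
  · rw [← iInter_cthickening_eq_closure_of_tendsto hε0]
    exact iInter_mono fun q => closure_convexHull_subset_cthickening_convexHull
      (image2_subset_thickening_image fun y hy => hequi q y hy.2)
  · exact closure_mono (convexHull_mono (image_subset_image2_right (mem_ball_self (hδpos q))))

theorem iInter_closedConvexHull_image2_eq (m : ℕ)
    (f : EuclideanSpace ℝ (Fin m) → EuclideanSpace ℝ (Fin m) → EuclideanSpace ℝ (Fin m))
    (xstar ystar : EuclideanSpace ℝ (Fin m)) (r' : ℝ) (hr' : 0 < r')
    (N : Set (EuclideanSpace ℝ (Fin m))) (hN : volume N = 0)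
    (δ ε : ℕ → ℝ) (hδpos : ∀ q, 0 < δ q) (hεpos : ∀ q, 0 < ε q)
    (hδ0 : Tendsto δ atTop (nhds 0)) (hε0 : Tendsto ε atTop (nhds 0))
    (hequi : ∀ q, ∀ y ∉ N,
      (fun x => f x y) '' ball xstar (δ q) ⊆ ball (f xstar y) (ε q))
    (C : ℝ) (hbd : ∀ q, ∀ x ∈ ball xstar (δ q), ∀ y ∈ ball ystar r', ‖f x y‖ ≤ C) :
    (⋂ q : ℕ, closure (convexHull ℝ (Set.image2 f (ball xstar (δ q)) (ball ystar r' \ N)))) =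
      closure (convexHull ℝ (f xstar '' (ball ystar r' \ N))) :=
  iInter_closedConvexHull_image2_eq_general m f xstar ystar r' N δ ε hδpos hε0 hequi
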